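/- Let p_1, ..., p_t be polynomials orthonormal with respect to a positive Borel measure σ on ℝ, and let z_1, ..., z_t be distinct real numbers. Define the t×t matrix V by V_{ij} = p_i(z_j). Then the smallest singular value of V satisfies σ_min(V) ≥ (∫_ℝ Σ_{r=1}^t ℓ_r(y)² dσ(y))^{-1/2}, where ℓ_r(y) = Π_{s ≠ r} (y - z_s)/(z_r - z_s). -/
import Mathlib

open Polynomial MeasureTheory Finset

private lemma gautschi_span_aux {t : ℕ} (p : Fin t → Polynomial ℝ)
    (hdeg : ∀ i : Fin t, (p i).natDegree = (i : ℕ)) (hne : ∀ i, p i ≠ 0) :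
    ∀ n : ℕ, n ≤ t → ∀ q : Polynomial ℝ, q.degree < (n : WithBot ℕ) →
      ∃ c : Fin t → ℝ, q = ∑ i, Polynomial.C (c i) * p i := by
  intro n
  induction n with
  | zero =>
    intro _ q hq
    have hq0 : q = 0 := by
      rw [← Polynomial.degree_eq_bot]
      exact Nat.WithBot.lt_zero_iff.mp (by exact_mod_cast hq)
    exact ⟨0, by simp [hq0]⟩
  | succ n ih =>
    intro hnt q hq
    by_cases hq0 : q = 0
    · exact ⟨0, by simp [hq0]⟩
    have hd : q.natDegree < n + 1 := (Polynomial.natDegree_lt_iff_degree_lt hq0).mpr (by exact_mod_cast hq)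
    rcases Nat.lt_succ_iff_lt_or_eq.mp hd with hlt | heq
    · exact ih (Nat.le_of_succ_le hnt) q ((Polynomial.natDegree_lt_iff_degree_lt hq0).mp hlt)
    · set i : Fin t := ⟨n, hnt⟩ with hi
      have hpi : (p i).natDegree = n := by rw [hdeg i]
      have hlcp : (p i).leadingCoeff ≠ 0 := Polynomial.leadingCoeff_ne_zero.mpr (hne i)
      set a : ℝ := q.leadingCoeff / (p i).leadingCoeff with haa
      have ha : a ≠ 0 := div_ne_zero (Polynomial.leadingCoeff_ne_zero.mpr hq0) hlcp
      have hdegeq : q.degree = (Polynomial.C a * p i).degree := by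
        rw [Polynomial.degree_C_mul ha, Polynomial.degree_eq_natDegree hq0,
          Polynomial.degree_eq_natDegree (hne i), hpi, heq]
      have hlc : q.leadingCoeff = (Polynomial.C a * p i).leadingCoeff := by
        rw [Polynomial.leadingCoeff_mul, Polynomial.leadingCoeff_C, haa,
          div_mul_cancel₀ _ hlcp]
      have hsub : (q - Polynomial.C a * p i).degree < q.degree :=
        Polynomial.degree_sub_lt hdegeq hq0 hlc
      have hsub' : (q - Polynomial.C a * p i).degree < (n : WithBot ℕ) := by
        rw [Polynomial.degree_eq_natDegree hq0, heq] at hsub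
        exact_mod_cast hsub
      obtain ⟨c', hc'⟩ := ih (Nat.le_of_succ_le hnt) _ hsub'
      refine ⟨fun j => c' j + if j = i then a else 0, ?_⟩
      have hsplit : q = (q - Polynomial.C a * p i) + Polynomial.C a * p i := by ring
      rw [hsplit, hc']
      simp only [map_add, add_mul, Finset.sum_add_distrib, apply_ite Polynomial.C,
        map_zero, ite_mul, zero_mul, Finset.sum_ite_eq', Finset.mem_univ, if_true]

private lemma gautschi_integrable_mul {σ : Measure ℝ} {f g : ℝ → ℝ}
    (hfc : Continuous f) (hgc : Continuous g)
    (hf : Integrable (fun y => f y * f y) σ) (hg : Integrable (fun y => g y * g y) σ) :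
    Integrable (fun y => f y * g y) σ := by
  refine Integrable.mono' ((hf.add hg).div_const 2)
    ((hfc.mul hgc).aestronglyMeasurable) (ae_of_all _ fun y => ?_)
  simp only [Pi.add_apply, Pi.div_apply]
  rw [Real.norm_eq_abs]
  refine abs_le.mpr ⟨?_, ?_⟩
  · nlinarith [sq_nonneg (f y + g y)]
  · nlinarith [sq_nonneg (f y - g y)]

/-- Gautschi's lower bound on the smallest singular value of a Vandermonde-type
matrix built from orthonormal polynomials: for every vector v,
σ_min‖v‖ ≤ ‖Vv‖ with σ_min ≥ (∫ Σ_r ℓ_r² dσ)^{-1/2}. -/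
theorem gautschi_smallest_singular_value (t : ℕ) (ht : 0 < t)
    (σ : Measure ℝ) (p : Fin t → Polynomial ℝ)
    (hdeg : ∀ i : Fin t, (p i).natDegree = (i : ℕ))
    (horth : ∀ i j : Fin t,
      ∫ y, (p i).eval y * (p j).eval y ∂σ = if i = j then 1 else 0)
    (z : Fin t → ℝ) (hz : Function.Injective z)
    (V : Matrix (Fin t) (Fin t) ℝ) (hV : ∀ i j, V i j = (p i).eval (z j)) :
    ∀ v : Fin t → ℝ,
      (∫ y, ∑ r : Fin t,
          ((∏ s ∈ Finset.univ.erase r,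
            (Polynomial.C (z r - z s)⁻¹ * (Polynomial.X - Polynomial.C (z s)))).eval y) ^ 2
        ∂σ) ^ (-(1:ℝ)/2) * Real.sqrt (∑ i, v i ^ 2)
      ≤ Real.sqrt (∑ i, (V.mulVec v i) ^ 2) := by
  intro v
  set ℓ : Fin t → Polynomial ℝ := fun r =>
    ∏ s ∈ Finset.univ.erase r,
      (Polynomial.C (z r - z s)⁻¹ * (Polynomial.X - Polynomial.C (z s))) with hℓ
  -- the p i are nonzero
  have hne : ∀ i, p i ≠ 0 := by
    intro i h
    have h1 := horth i i
    rw [if_pos rfl] at h1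
    simp [h] at h1
  -- integrability of p i * p i
  have hint2 : ∀ i, Integrable (fun y => (p i).eval y * (p i).eval y) σ := by
    intro i
    by_contra h
    have h1 := horth i i
    rw [if_pos rfl, integral_undef h] at h1
    norm_num at h1
  have hintmul : ∀ i j, Integrable (fun y => (p i).eval y * (p j).eval y) σ := fun i j =>
    gautschi_integrable_mul (p i).continuous_aeval (p j).continuous_aeval (hint2 i) (hint2 j)
  -- degree of ℓ r is < t
  have hdegℓ : ∀ r, (ℓ r).degree < (t : WithBot ℕ) := by
    intro r
    have h1 : (ℓ r).natDegree ≤ ∑ s ∈ Finset.univ.erase r,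
        ((Polynomial.C (z r - z s)⁻¹ * (Polynomial.X - Polynomial.C (z s))).natDegree) :=
      Polynomial.natDegree_prod_le _ _
    have h2 : (ℓ r).natDegree ≤ (Finset.univ.erase r).card := by
      refine h1.trans ?_
      calc ∑ s ∈ Finset.univ.erase r,
            ((Polynomial.C (z r - z s)⁻¹ * (Polynomial.X - Polynomial.C (z s))).natDegree)
          ≤ ∑ s ∈ Finset.univ.erase r, 1 := by
            refine Finset.sum_le_sum fun s _ => ?_
            calc (Polynomial.C (z r - z s)⁻¹ * (Polynomial.X - Polynomial.C (z s))).natDegree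
                ≤ (Polynomial.X - Polynomial.C (z s)).natDegree :=
                  Polynomial.natDegree_C_mul_le _ _
              _ = 1 := Polynomial.natDegree_X_sub_C _
        _ = (Finset.univ.erase r).card := by simp
    have h3 : (Finset.univ.erase r).card < t := by
      rw [Finset.card_erase_of_mem (Finset.mem_univ r), Finset.card_univ, Fintype.card_fin]
      omega
    calc (ℓ r).degree ≤ ((ℓ r).natDegree : WithBot ℕ) := Polynomial.degree_le_natDegree
      _ < (t : WithBot ℕ) := by exact_mod_cast lt_of_le_of_lt h2 h3
  -- expand ℓ r in the basis p
  have hspan := gautschi_span_aux p hdeg hne t le_rfl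
  choose c hc using fun r => hspan (ℓ r) (hdegℓ r)
  -- Lagrange property
  have hlag : ∀ r j, (ℓ r).eval (z j) = if r = j then 1 else 0 := by
    intro r j
    by_cases h : r = j
    · subst h
      rw [if_pos rfl, hℓ, Polynomial.eval_prod]
      refine Finset.prod_eq_one fun s hs => ?_
      have hs' : s ≠ r := Finset.ne_of_mem_erase hs
      have hzz : z r - z s ≠ 0 := sub_ne_zero.mpr fun h => hs' (hz h).symm
      simp only [Polynomial.eval_mul, Polynomial.eval_C, Polynomial.eval_sub, Polynomial.eval_X]
      exact inv_mul_cancel₀ hzz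
    · rw [if_neg h, hℓ, Polynomial.eval_prod]
      refine Finset.prod_eq_zero (Finset.mem_erase.mpr ⟨fun hj => h hj.symm, Finset.mem_univ j⟩) ?_
      simp
  -- matrix A with A * V = 1
  set A : Matrix (Fin t) (Fin t) ℝ := Matrix.of c with hA
  have hAV : A * V = 1 := by
    ext r j
    rw [Matrix.mul_apply, Matrix.one_apply]
    have h1 : ∑ i, A r i * V i j = (ℓ r).eval (z j) := by
      rw [hc r]
      simp [Polynomial.eval_finset_sum, hV, hA]
    rw [h1, hlag r j]
  -- v = A (V v)
  have hv : ∀ r, v r = ∑ i, A r i * V.mulVec v i := by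
    intro r
    have h1 : A.mulVec (V.mulVec v) = v := by
      rw [Matrix.mulVec_mulVec, hAV, Matrix.one_mulVec]
    conv_lhs => rw [← h1]
    simp [Matrix.mulVec, dotProduct]
  -- Cauchy-Schwarz
  set Y : ℝ := ∑ i, (V.mulVec v i) ^ 2 with hY
  set S : ℝ := ∑ r, ∑ i, c r i ^ 2 with hS
  have hY0 : 0 ≤ Y := Finset.sum_nonneg fun i _ => sq_nonneg _
  have hmain : (∑ i, v i ^ 2) ≤ S * Y := by
    calc ∑ r, v r ^ 2 ≤ ∑ r, (∑ i, (c r i) ^ 2) * Y := by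
          refine Finset.sum_le_sum fun r _ => ?_
          rw [hv r]
          have := Finset.sum_mul_sq_le_sq_mul_sq Finset.univ (fun i => A r i)
            (fun i => V.mulVec v i)
          simpa [hA] using this
      _ = S * Y := by rw [hS, ← Finset.sum_mul]
  -- S is positive
  have hS0 : 0 < S := by
    rcases (Finset.sum_nonneg fun r _ => Finset.sum_nonneg fun i _ => sq_nonneg (c r i)).lt_or_eq
      with h | h
    · exact h
    exfalso
    have hall : ∀ r i, c r i = 0 := by
      intro r i
      have h1 := (Finset.sum_eq_zero_iff_of_nonneg
        (fun r _ => Finset.sum_nonneg fun i _ => sq_nonneg (c r i))).mp h.symm r (Finset.mem_univ r)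
      have h2 := (Finset.sum_eq_zero_iff_of_nonneg (fun i _ => sq_nonneg (c r i))).mp h1 i
        (Finset.mem_univ i)
      exact pow_eq_zero_iff (two_ne_zero) |>.mp h2
    have h3 := congrArg (fun M : Matrix (Fin t) (Fin t) ℝ => M ⟨0, ht⟩ ⟨0, ht⟩) hAV
    simp [Matrix.mul_apply, Matrix.one_apply, hall, hA] at h3
  -- compute the integral
  have hsq : ∀ r y, (ℓ r).eval y ^ 2
      = ∑ i, ∑ j, (c r i * c r j) * ((p i).eval y * (p j).eval y) := by
    intro r y
    have h1 : (ℓ r).eval y = ∑ i, c r i * (p i).eval y := by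
      rw [hc r]; simp [Polynomial.eval_finset_sum]
    rw [h1, sq, Finset.sum_mul_sum]
    exact Finset.sum_congr rfl fun i _ => Finset.sum_congr rfl fun j _ => by ring
  have hintc : ∀ (i j : Fin t) (a : ℝ),
      Integrable (fun y => a * ((p i).eval y * (p j).eval y)) σ := fun i j a =>
    (hintmul i j).const_mul a
  have hK : (∫ y, ∑ r, (ℓ r).eval y ^ 2 ∂σ) = S := by
    calc ∫ y, ∑ r, (ℓ r).eval y ^ 2 ∂σ
        = ∫ y, ∑ r, ∑ i, ∑ j, (c r i * c r j) * ((p i).eval y * (p j).eval y) ∂σ := by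
          simp_rw [hsq]
      _ = ∑ r, ∑ i, ∑ j, ∫ y, (c r i * c r j) * ((p i).eval y * (p j).eval y) ∂σ := by
          rw [integral_finset_sum _ (fun r _ => integrable_finset_sum _
            (fun i _ => integrable_finset_sum _ (fun j _ => hintc i j _)))]
          refine Finset.sum_congr rfl fun r _ => ?_
          rw [integral_finset_sum _ (fun i _ => integrable_finset_sum _
            (fun j _ => hintc i j _))]
          exact Finset.sum_congr rfl fun i _ =>
            integral_finset_sum _ (fun j _ => hintc i j _)
      _ = ∑ r, ∑ i, ∑ j, (c r i * c r j) * (if i = j then 1 else 0) := by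
          refine Finset.sum_congr rfl fun r _ => Finset.sum_congr rfl fun i _ =>
            Finset.sum_congr rfl fun j _ => ?_
          rw [integral_const_mul, horth]
      _ = S := by
          rw [hS]
          refine Finset.sum_congr rfl fun r _ => Finset.sum_congr rfl fun i _ => ?_
          simp [mul_ite, Finset.sum_ite_eq, sq]
  -- finish
  have hgoal : (∫ y, ∑ r : Fin t, (ℓ r).eval y ^ 2 ∂σ) ^ (-(1:ℝ)/2)
      * Real.sqrt (∑ i, v i ^ 2) ≤ Real.sqrt Y := by
    rw [hK]
    have hrpow : S ^ (-(1:ℝ)/2) = (Real.sqrt S)⁻¹ := by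
      rw [neg_div, Real.rpow_neg hS0.le, Real.sqrt_eq_rpow]
    rw [hrpow, inv_mul_le_iff₀ (Real.sqrt_pos.mpr hS0), ← Real.sqrt_mul hS0.le]
    exact Real.sqrt_le_sqrt hmain
  exact hgoal
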